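/- arXiv:1212.1542 — 2 statements merged into one kernel-verified Lean document; each statement's English description precedes it below -/
import Mathlib

section
/- Let κ be a measurable cardinal and let V be a normal ultrafilter on κ such that {α < κ : α is a supercompact cardinal} ∈ V. Then there exists a normal ultrafilter W on κ such that {α < κ : α is a compact cardinal} ∈ W but {α < κ : α is a supercompact cardinal} ∉ W. -/
open Set

namespace Separability

/-- `F` is an ultrafilter on the set `D` (members of `F` are subsets of `D`). -/
structure IsUltrafilterOnSet {σ : Type*} (D : Set σ) (F : Set (Set σ)) : Prop where
  sets_subset : ∀ X ∈ F, X ⊆ D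
  univ_mem : D ∈ F
  empty_not_mem : ∅ ∉ F
  superset_mem : ∀ X ∈ F, ∀ Y, Y ⊆ D → X ⊆ Y → Y ∈ F
  inter_mem : ∀ X ∈ F, ∀ Y ∈ F, X ∩ Y ∈ F
  mem_or_compl_mem : ∀ X, X ⊆ D → (X ∈ F ∨ D \ X ∈ F)

/-- An ultrafilter on (the type of ordinals below) `κ`. -/
def IsUltrafilterOn (κ : Ordinal) (F : Set (Set Ordinal)) : Prop :=
  IsUltrafilterOnSet (Set.Iio κ) F

/-- `F` is a *normal* ultrafilter on `κ`: it is an ultrafilter on `κ`, it contains every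
co-bounded subset of `κ`, and every function that is regressive on some member of `F`
is constant on some member of `F`. -/
def IsNormalUltrafilterOn (κ : Ordinal) (F : Set (Set Ordinal)) : Prop :=
  IsUltrafilterOn κ F ∧
  (∀ α < κ, {β | α ≤ β ∧ β < κ} ∈ F) ∧
  (∀ f : Ordinal → Ordinal, ∀ S ∈ F, (∀ β ∈ S, 0 < β → f β < β) →
    ∃ T ∈ F, ∃ γ, ∀ β ∈ T, f β = γ)

/-- The ordinal `κ` is a cardinal. -/
def IsCard (κ : Ordinal) : Prop := κ.card.ord = κ

/-- `F` (an ultrafilter on the set `D`) is `κ`-complete: it is closed under intersections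
of families of fewer than `κ` sets. -/
def IsComplete {σ : Type*} (κ : Ordinal) (D : Set σ) (F : Set (Set σ)) : Prop :=
  ∀ δ < κ, ∀ g : Set.Iio δ → Set σ, (∀ i, g i ∈ F) → (D ∩ ⋂ i, g i) ∈ F

/-- `F` is nonprincipal: it contains no singleton. -/
def IsNonprincipal {σ : Type*} (F : Set (Set σ)) : Prop := ∀ b : σ, {b} ∉ F

/-- `α` is a measurable cardinal: an uncountable cardinal carrying a nonprincipal
`α`-complete ultrafilter on `α`. -/
def IsMeasurable (α : Ordinal) : Prop :=
  IsCard α ∧ Ordinal.omega0 < α ∧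
    ∃ F, IsUltrafilterOn α F ∧ IsNonprincipal F ∧ IsComplete α (Set.Iio α) F

/-- `P_κ(λ)`: the subsets of `λ` of cardinality less than `κ`. -/
def sP (κ lam : Ordinal.{0}) : Set (Set Ordinal.{0}) :=
  {x | x ⊆ Set.Iio lam ∧ Cardinal.mk x < Cardinal.lift.{1} κ.card}

/-- `F`, an ultrafilter on `P_κ(λ)`, is *fine*:
for every `i < λ` the set `{x ∈ P_κ(λ) : i ∈ x}` belongs to `F`. -/
def IsFine (κ lam : Ordinal) (F : Set (Set (Set Ordinal))) : Prop :=
  ∀ i < lam, {x | x ∈ sP κ lam ∧ i ∈ x} ∈ F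

/-- `κ` is a compact (strongly compact) cardinal: an uncountable cardinal such that for every
cardinal `λ ≥ κ` there is a `κ`-complete fine ultrafilter on `P_κ(λ)`. -/
def IsCompact (κ : Ordinal) : Prop :=
  IsCard κ ∧ Ordinal.omega0 < κ ∧
    ∀ lam, IsCard lam → κ ≤ lam →
      ∃ F, IsUltrafilterOnSet (sP κ lam) F ∧ IsComplete κ (sP κ lam) F ∧ IsFine κ lam F

/-- `F`, an ultrafilter on `P_κ(λ)`, is *normal*: every choice function on a member of `F`
(`f x ∈ x` for all `x` in some member of `F`) is constant on some member of `F`. -/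
def IsNormalFineMeasure (F : Set (Set (Set Ordinal))) : Prop :=
  ∀ f : Set Ordinal → Ordinal, ∀ S ∈ F, (∀ x ∈ S, f x ∈ x) →
    ∃ T ∈ F, ∃ γ, ∀ x ∈ T, f x = γ

/-- `κ` is a supercompact cardinal: for every cardinal `λ ≥ κ` there is a `κ`-complete
fine normal ultrafilter on `P_κ(λ)`. -/
def IsSupercompact (κ : Ordinal) : Prop :=
  IsCard κ ∧
    ∀ lam, IsCard lam → κ ≤ lam →
      ∃ F, IsUltrafilterOnSet (sP κ lam) F ∧ IsComplete κ (sP κ lam) F ∧ IsFine κ lam F ∧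
        IsNormalFineMeasure F

/-- The set of measurable cardinals below `κ`. -/
def measSet (κ : Ordinal) : Set Ordinal := {α | α < κ ∧ IsMeasurable α}

/-- `S_X = {α < κ : α is measurable and X ∩ α ∈ U_α}`. -/
def sX (κ : Ordinal) (U : Ordinal → Set (Set Ordinal)) (X : Set Ordinal) : Set Ordinal :=
  {α | α < κ ∧ IsMeasurable α ∧ X ∩ Set.Iio α ∈ U α}

/-- The sum of `⟨U_α : α measurable below κ⟩` over `V`: `Y` belongs to the sum iff
`S_Y ∈ V`. -/
def sumUF (κ : Ordinal) (U : Ordinal → Set (Set Ordinal)) (V : Set (Set Ordinal)) :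
    Set (Set Ordinal) :=
  {Y | Y ⊆ Set.Iio κ ∧ sX κ U Y ∈ V}

/-!
Let `G` be the set of supercompact `α < κ` that are limits of supercompact cardinals; `G ∈ V` by
normality. For `α ∈ G`, a normal fine measure on `P_α(2^α)` projects along `x ↦ x ∩ α` to a
normal measure `D` on `α`. Coding the subsets of `α` by ordinals below `2^α`, almost every `x`
sees through the codes it contains an `(x ∩ α)`-complete nonprincipal ultrafilter on `x ∩ α`, so
`D`-almost every `β` is measurable. `D`-almost every `β` is also a limit of supercompact, hence
compact, cardinals, and a measurable limit of compact cardinals is compact (Menas). If `D` still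
concentrates on supercompact cardinals, replace it by the measure obtained by induction for
`α < κ`. The sum over `V` of these measures is normal, concentrates on compact cardinals, and does
not concentrate on supercompact ones, since none of its summands does.
-/

/-! ### Ultrafilters on a set as Mathlib ultrafilters -/

section Ultrafilters

variable {σ : Type*} {D X : Set σ} {F : Set (Set σ)}

namespace IsUltrafilterOnSet

theorem compl_mem_iff (hF : IsUltrafilterOnSet D F) (hX : X ⊆ D) : D \ X ∈ F ↔ X ∉ F := by
  refine ⟨fun hc hX' => hF.empty_not_mem ?_, (hF.mem_or_compl_mem X hX).resolve_left⟩
  simpa using hF.inter_mem _ hX' _ hc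

theorem of_inter_mem (hsub : ∀ X ∈ F, X ⊆ D) (hempty : ∅ ∉ F)
    (hinter : ∀ X ∈ F, ∀ Y ∈ F, X ∩ Y ∈ F) (hcompl : ∀ X ⊆ D, X ∈ F ∨ D \ X ∈ F) :
    IsUltrafilterOnSet D F where
  sets_subset := hsub
  univ_mem := by simpa using (hcompl ∅ (empty_subset D)).resolve_left hempty
  empty_not_mem := hempty
  superset_mem X hX Y hY hXY := (hcompl Y hY).resolve_right fun hc => hempty <| by
    rw [← (disjoint_sdiff_right.mono_left hXY).inter_eq]
    exact hinter X hX _ hc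
  inter_mem := hinter
  mem_or_compl_mem := hcompl

def toUltrafilter (hF : IsUltrafilterOnSet D F) : Ultrafilter σ :=
  Ultrafilter.ofComplNotMemIff
    { sets := {X | X ∩ D ∈ F}
      univ_sets := by change univ ∩ D ∈ F; rw [univ_inter]; exact hF.univ_mem
      sets_of_superset := fun hX hXY =>
        hF.superset_mem _ hX _ inter_subset_right (inter_subset_inter_left _ hXY)
      inter_sets := fun {X Y} hX hY => by
        change X ∩ Y ∩ D ∈ F
        rw [inter_inter_distrib_right]
        exact hF.inter_mem _ hX _ hY }
    fun X => by
      have hcompl : D \ (Xᶜ ∩ D) = X ∩ D := by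
        rw [sdiff_inter_self_eq_sdiff, _root_.sdiff_compl]
        exact inf_comm D X
      change Xᶜ ∩ D ∉ F ↔ X ∩ D ∈ F
      rw [← hF.compl_mem_iff inter_subset_right, hcompl]

theorem mem_toUltrafilter (hF : IsUltrafilterOnSet D F) : X ∈ hF.toUltrafilter ↔ X ∩ D ∈ F :=
  Iff.rfl

theorem mem_toUltrafilter_of_subset (hF : IsUltrafilterOnSet D F) (hX : X ⊆ D) :
    X ∈ hF.toUltrafilter ↔ X ∈ F := by
  rw [mem_toUltrafilter, inter_eq_left.2 hX]

theorem mem_toUltrafilter_of_mem (hF : IsUltrafilterOnSet D F) (hX : X ∈ F) :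
    X ∈ hF.toUltrafilter :=
  (hF.mem_toUltrafilter_of_subset (hF.sets_subset X hX)).2 hX

theorem eventually_toUltrafilter (hF : IsUltrafilterOnSet D F) {p : σ → Prop} :
    (∀ᶠ x in hF.toUltrafilter, p x) ↔ {x | x ∈ D ∧ p x} ∈ F := by
  change {x | p x} ∩ D ∈ F ↔ D ∩ {x | p x} ∈ F
  rw [inter_comm]

end IsUltrafilterOnSet

def setsWithin (𝓤 : Ultrafilter σ) (D : Set σ) : Set (Set σ) :=
  {X | X ⊆ D ∧ X ∈ 𝓤}

variable {𝓤 : Ultrafilter σ} {κ : Ordinal}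

theorem isUltrafilterOnSet_setsWithin (hD : D ∈ 𝓤) : IsUltrafilterOnSet D (setsWithin 𝓤 D) where
  sets_subset _ hX := hX.1
  univ_mem := ⟨subset_rfl, hD⟩
  empty_not_mem h := 𝓤.empty_notMem h.2
  superset_mem _ hX _ hY hXY := ⟨hY, Filter.mem_of_superset hX.2 hXY⟩
  inter_mem _ hX _ hY := ⟨inter_subset_left.trans hX.1, Filter.inter_mem hX.2 hY.2⟩
  mem_or_compl_mem X hX := (𝓤.mem_or_compl_mem X).imp (⟨hX, ·⟩)
    fun h => ⟨sdiff_subset, by rw [sdiff_eq_compl_inter]; exact Filter.inter_mem h hD⟩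

theorem sep_mem_setsWithin (hD : D ∈ 𝓤) {p : σ → Prop} :
    {x | x ∈ D ∧ p x} ∈ setsWithin 𝓤 D ↔ ∀ᶠ x in 𝓤, p x :=
  ⟨fun h => Filter.mem_of_superset h.2 fun _ hx => hx.2,
    fun h => ⟨fun _ hx => hx.1, Filter.inter_mem hD h⟩⟩

theorem eventually_bind {τ : Type*} {m : σ → Ultrafilter τ} {p : τ → Prop} :
    (∀ᶠ x in 𝓤.bind m, p x) ↔ ∀ᶠ a in 𝓤, ∀ᶠ x in m a, p x :=
  Iff.rfl

def IsCompleteFilter (κ : Ordinal) (𝓤 : Ultrafilter σ) : Prop :=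
  ∀ δ < κ, ∀ p : Iio δ → σ → Prop, (∀ i, ∀ᶠ x in 𝓤, p i x) → ∀ᶠ x in 𝓤, ∀ i, p i x

theorem IsComplete.isCompleteFilter (hF : IsUltrafilterOnSet D F) (h : IsComplete κ D F) :
    IsCompleteFilter κ hF.toUltrafilter := by
  intro δ hδ p hp
  have hD := h δ hδ _ fun i => hF.eventually_toUltrafilter.1 (hp i)
  rw [hF.eventually_toUltrafilter]
  convert hD using 1
  ext x
  simp only [mem_ofPred_eq, mem_inter_iff, mem_iInter]
  exact ⟨fun hx => ⟨hx.1, fun i => ⟨hx.1, hx.2 i⟩⟩, fun hx => ⟨hx.1, fun i => (hx.2 i).2⟩⟩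

theorem isComplete_setsWithin (hD : D ∈ 𝓤) (h : IsCompleteFilter κ 𝓤) :
    IsComplete κ D (setsWithin 𝓤 D) := fun δ hδ g hg =>
  ⟨inter_subset_left, Filter.inter_mem hD <| Filter.mem_of_superset
    (h δ hδ (fun i x => x ∈ g i) fun i => (hg i).2) fun _ hx => mem_iInter.2 hx⟩

end Ultrafilters

structure IsFineMeasure (κ lam : Ordinal.{0}) (𝓖 : Ultrafilter (Set Ordinal.{0})) : Prop where
  eventually_mem_sP : ∀ᶠ x in 𝓖, x ∈ sP κ lam
  complete : IsCompleteFilter κ 𝓖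
  eventually_mem : ∀ i < lam, ∀ᶠ x in 𝓖, i ∈ (x : Set Ordinal)

theorem exists_isFineMeasure_iff {κ lam : Ordinal.{0}} :
    (∃ F, IsUltrafilterOnSet (sP κ lam) F ∧ IsComplete κ (sP κ lam) F ∧ IsFine κ lam F) ↔
      ∃ 𝓖, IsFineMeasure κ lam 𝓖 := by
  constructor
  · rintro ⟨F, hF, hc, hfine⟩
    exact ⟨hF.toUltrafilter, hF.mem_toUltrafilter_of_mem hF.univ_mem, hc.isCompleteFilter hF,
      fun i hi => hF.eventually_toUltrafilter.2 (hfine i hi)⟩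
  · rintro ⟨𝓖, hsP, hc, hfine⟩
    exact ⟨setsWithin 𝓖 (sP κ lam), isUltrafilterOnSet_setsWithin hsP, isComplete_setsWithin hsP hc,
      fun i hi => (sep_mem_setsWithin hsP).2 (hfine i hi)⟩

theorem isCompact_iff {κ : Ordinal.{0}} : IsCompact κ ↔ IsCard κ ∧ Ordinal.omega0 < κ ∧
    ∀ lam, IsCard lam → κ ≤ lam → ∃ 𝓖, IsFineMeasure κ lam 𝓖 := by
  simp only [IsCompact, exists_isFineMeasure_iff]

structure IsSupercompactMeasure (κ lam : Ordinal.{0}) (𝓖 : Ultrafilter (Set Ordinal.{0})) : Prop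
    extends IsFineMeasure κ lam 𝓖 where
  isCard : IsCard κ
  le : κ ≤ lam
  exists_eventually_eq :
    ∀ f : Set Ordinal → Ordinal, (∀ᶠ x in 𝓖, f x ∈ x) → ∃ γ, ∀ᶠ x in 𝓖, f x = γ

theorem IsSupercompact.exists_isSupercompactMeasure {κ lam : Ordinal.{0}} (h : IsSupercompact κ)
    (hlam : IsCard lam) (hle : κ ≤ lam) : ∃ 𝓖, IsSupercompactMeasure κ lam 𝓖 := by
  obtain ⟨F, hF, hc, hfine, hnorm⟩ := h.2 lam hlam hle
  refine ⟨hF.toUltrafilter, ⟨hF.mem_toUltrafilter_of_mem hF.univ_mem, hc.isCompleteFilter hF,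
    fun i hi => hF.eventually_toUltrafilter.2 (hfine i hi)⟩, h.1, hle, fun f hf => ?_⟩
  obtain ⟨T, hT, γ, hγ⟩ := hnorm f _ (hF.eventually_toUltrafilter.1 hf) fun x hx => hx.2
  exact ⟨γ, Filter.mem_of_superset (hF.mem_toUltrafilter_of_mem hT) hγ⟩

/-! ### Normal ultrafilters on ordinals -/

/-- Filter form of `IsNormalUltrafilterOn`. The strict inequality in `eventually_gt` excludes
the principal normal ultrafilters on successor ordinals. -/
structure IsNormalOn (κ : Ordinal) (𝓤 : Ultrafilter Ordinal) : Prop where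
  eventually_lt : ∀ᶠ β in 𝓤, β < κ
  eventually_gt : ∀ β < κ, ∀ᶠ γ in 𝓤, β < γ
  exists_eventually_eq : ∀ f : Ordinal → Ordinal, (∀ᶠ β in 𝓤, f β < β) → ∃ γ, ∀ᶠ β in 𝓤, f β = γ

theorem IsNormalUltrafilterOn.isNormalOn {κ : Ordinal} {V : Set (Set Ordinal)}
    (hV : IsNormalUltrafilterOn κ V) (hκ : Order.IsSuccLimit κ) :
    IsNormalOn κ hV.1.toUltrafilter where
  eventually_lt := hV.1.mem_toUltrafilter_of_mem hV.1.univ_mem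
  eventually_gt β hβ := Filter.mem_of_superset (hV.1.mem_toUltrafilter_of_mem
    (hV.2.1 _ (hκ.succ_lt hβ))) fun _ hγ => Order.succ_le_iff.1 hγ.1
  exists_eventually_eq f hf := by
    obtain ⟨T, hT, γ, hγ⟩ := hV.2.2 f _ (hV.1.eventually_toUltrafilter.1 hf) fun β hβ _ => hβ.2
    exact ⟨γ, Filter.mem_of_superset (hV.1.mem_toUltrafilter_of_mem hT) hγ⟩

namespace IsNormalOn

variable {κ : Ordinal} {𝓤 : Ultrafilter Ordinal} (h : IsNormalOn κ 𝓤)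
include h

theorem pos : 0 < κ := by
  obtain ⟨β, hβ⟩ := Ultrafilter.nonempty_of_mem h.eventually_lt
  exact hβ.pos

theorem isNormalUltrafilterOn : IsNormalUltrafilterOn κ (setsWithin 𝓤 (Iio κ)) := by
  refine ⟨isUltrafilterOnSet_setsWithin h.eventually_lt, fun β hβ => ?_, fun f S hS hf => ?_⟩
  · refine ⟨fun _ hγ => hγ.2, ?_⟩
    filter_upwards [h.eventually_gt β hβ, h.eventually_lt] with γ h1 h2 using ⟨h1.le, h2⟩
  · obtain ⟨γ, hγ⟩ := h.exists_eventually_eq f <| by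
      filter_upwards [hS.2, h.eventually_gt 0 h.pos] with β h1 h2 using hf β h1 h2
    exact ⟨_, (sep_mem_setsWithin h.eventually_lt).2 hγ, γ, fun _ hβ => hβ.2⟩

theorem singleton_notMem (b : Ordinal) : {b} ∉ 𝓤 := fun hb => by
  have hb' : ∀ᶠ γ in 𝓤, γ = b := hb
  obtain ⟨γ, rfl, hγκ⟩ := (hb'.and h.eventually_lt).exists
  obtain ⟨γ', rfl, hγ'⟩ := (hb'.and (h.eventually_gt _ hγκ)).exists
  exact hγ'.false

theorem omega0_lt : Ordinal.omega0 < κ := by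
  -- below `ω` the predecessor is regressive; if it were a.e. `c`, `{succ c}` would be large
  by_contra! hκ
  have hsucc : ∀ᶠ β in 𝓤, Order.succ (Ordinal.pred β) = β := by
    filter_upwards [h.eventually_lt, h.eventually_gt 0 h.pos] with β hβ h0
    obtain ⟨n, rfl⟩ := Ordinal.lt_omega0.1 (hβ.trans_le hκ)
    cases n with
    | zero => simp at h0
    | succ n => simp [Ordinal.pred_add_one, Order.succ_eq_add_one]
  obtain ⟨c, hc⟩ := h.exists_eventually_eq _ (hsucc.mono fun β hβ => (Order.lt_succ _).trans_eq hβ)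
  have hβc : ∀ᶠ β in 𝓤, β = Order.succ c := by
    filter_upwards [hsucc, hc] with β h1 h2
    rw [← h1, h2]
  obtain ⟨β, hβκ, hβ⟩ := (h.eventually_lt.and hβc).exists
  obtain ⟨γ, hγ, hγc⟩ := ((h.eventually_gt _ (hβ ▸ hβκ)).and hβc).exists
  exact hγ.ne' hγc

theorem eventually_forall_lt_exists {p : Ordinal → Prop}
    (hp : ∀ γ < κ, ∃ a, p a ∧ γ < a ∧ a < κ) :
    ∀ᶠ β in 𝓤, ∀ γ < β, ∃ a, p a ∧ γ < a ∧ a < β := by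
  by_contra hnot
  have hbad : ∀ᶠ β in 𝓤, ∃ γ, γ < β ∧ ∀ a, p a → γ < a → β ≤ a :=
    (Ultrafilter.eventually_not.2 hnot).mono fun β hβ => by push Not at hβ; exact hβ
  obtain ⟨g, hg⟩ := Filter.skolem.1 hbad
  obtain ⟨c, hc⟩ := h.exists_eventually_eq g (hg.mono fun β hβ => hβ.1)
  obtain ⟨β₀, hβ₀, hβ₀c, hβ₀κ⟩ := (hg.and (hc.and h.eventually_lt)).exists
  obtain ⟨a, hpa, hca, haκ⟩ := hp c ((hβ₀c ▸ hβ₀.1).trans hβ₀κ)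
  obtain ⟨β, hβ, hβc, haβ⟩ := (hg.and (hc.and (h.eventually_gt a haκ))).exists
  exact (hβ.2 a hpa (hβc ▸ hca)).not_gt haβ

theorem card_le_of_eventually_injOn {μ : Ordinal} {e : Ordinal → Ordinal → Ordinal}
    (he : ∀ᶠ β in 𝓤, μ < β ∧ MapsTo (e β) (Iio β) (Iio μ) ∧ InjOn (e β) (Iio β)) :
    κ.card ≤ μ.card := by
  -- normality stabilises each `e · γ` to some `q γ`, and `q` injects `κ` into `μ`
  have hq : ∀ γ < κ, ∃ q < μ, ∀ᶠ β in 𝓤, γ < β ∧ e β γ = q := by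
    intro γ hγ
    obtain ⟨q, hq⟩ := h.exists_eventually_eq (e · γ) <| by
      filter_upwards [he, h.eventually_gt γ hγ] with β hβ hγβ using (hβ.2.1 hγβ).trans hβ.1
    obtain ⟨β, hβ, hγβ, hβq⟩ := (he.and ((h.eventually_gt γ hγ).and hq)).exists
    exact ⟨q, hβq ▸ hβ.2.1 hγβ, (h.eventually_gt γ hγ).and hq⟩
  choose! q hqμ hq using hq
  have hinj : InjOn q (Iio κ) := by
    intro γ hγ γ' hγ' hqq
    obtain ⟨β, hβ, ⟨hγβ, hβγ⟩, hγ'β, hβγ'⟩ := (he.and ((hq γ hγ).and (hq γ' hγ'))).exists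
    exact hβ.2.2 hγβ hγ'β (hβγ.trans (hqq.trans hβγ'.symm))
  have hle := Cardinal.mk_le_mk_of_subset (s := q '' Iio κ) (t := Iio μ) <| by
    rintro _ ⟨γ, hγ, rfl⟩
    exact hqμ γ hγ
  rwa [Cardinal.mk_image_eq_of_injOn _ _ hinj, Cardinal.mk_Iio_ordinal, Cardinal.mk_Iio_ordinal,
    Cardinal.lift_le] at hle

theorem eventually_isCard (hκ : IsCard κ) : ∀ᶠ β in 𝓤, IsCard β := by
  by_contra hnot
  have hlt : ∀ᶠ β : Ordinal in 𝓤, β.card.ord < β := (Ultrafilter.eventually_not.2 hnot).mono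
    fun β hβ => (Cardinal.ord_card_le β).lt_of_ne hβ
  obtain ⟨μ, hμ⟩ := h.exists_eventually_eq _ hlt
  have hemb : ∀ᶠ β in 𝓤, ∃ e : Ordinal → Ordinal,
      μ < β ∧ MapsTo e (Iio β) (Iio μ) ∧ InjOn e (Iio β) := by
    filter_upwards [hlt, hμ] with β hβ hβμ
    obtain ⟨f⟩ := Cardinal.eq.1 (by
      rw [Cardinal.mk_Iio_ordinal, Cardinal.mk_Iio_ordinal, ← hβμ, Cardinal.card_ord] :
      Cardinal.mk (Iio β) = Cardinal.mk (Iio μ))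
    refine ⟨fun γ => if hγ : γ < β then f ⟨γ, hγ⟩ else 0, hβμ ▸ hβ, fun γ hγ => ?_,
      fun γ hγ γ' hγ' hff => ?_⟩
    · simp only [dif_pos (show γ < β from hγ)]
      exact (f _).2
    · simp only [dif_pos (show γ < β from hγ), dif_pos (show γ' < β from hγ')] at hff
      simpa using f.injective (Subtype.ext hff)
  obtain ⟨e, he⟩ := Filter.skolem.1 hemb
  obtain ⟨β, hβ, hβμ, hβκ⟩ := (hlt.and (hμ.and h.eventually_lt)).exists
  have hμκ : μ < κ.card.ord := hκ.symm ▸ (hβμ ▸ hβ).trans hβκ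
  exact (h.card_le_of_eventually_injOn he).not_gt (Cardinal.lt_ord.1 hμκ)

theorem bind {m : Ordinal → Ultrafilter Ordinal} (hm : ∀ᶠ α in 𝓤, IsNormalOn α (m α)) :
    IsNormalOn κ (𝓤.bind m) where
  eventually_lt := eventually_bind.2 <| by
    filter_upwards [hm, h.eventually_lt] with α hα hακ
    exact hα.eventually_lt.mono fun _ hβ => hβ.trans hακ
  eventually_gt β hβ := eventually_bind.2 <| by
    filter_upwards [hm, h.eventually_gt β hβ] with α hα hβα using hα.eventually_gt β hβα
  exists_eventually_eq f hf := by
    have hc : ∀ᶠ α in 𝓤, ∃ c, c < α ∧ ∀ᶠ β in m α, f β = c := by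
      filter_upwards [hm, eventually_bind.1 hf] with α hα hfα
      obtain ⟨c, hc⟩ := hα.exists_eventually_eq f hfα
      obtain ⟨β, hβc, hfβ, hβα⟩ := (hc.and (hfα.and hα.eventually_lt)).exists
      exact ⟨c, hβc ▸ hfβ.trans hβα, hc⟩
    obtain ⟨c, hc⟩ := Filter.skolem.1 hc
    obtain ⟨γ, hγ⟩ := h.exists_eventually_eq c (hc.mono fun _ h => h.1)
    exact ⟨γ, eventually_bind.2 <| by filter_upwards [hc, hγ] with α h1 h2 using h2 ▸ h1.2⟩

end IsNormalOn

/-! ### Compact and measurable cardinals -/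

theorem sP_mono {κ κ' lam : Ordinal.{0}} (h : κ ≤ κ') : sP κ lam ⊆ sP κ' lam :=
  fun _ hx => ⟨hx.1, hx.2.trans_le (Cardinal.lift_le.2 (Ordinal.card_le_card h))⟩

theorem lt_of_Iio_subset_of_mem_sP {κ lam β : Ordinal.{0}} {x : Set Ordinal.{0}} (hκ : IsCard κ)
    (hx : x ∈ sP κ lam) (hβ : Iio β ⊆ x) : β < κ := by
  have hlt := (Cardinal.mk_le_mk_of_subset hβ).trans_lt hx.2
  rw [Cardinal.mk_Iio_ordinal, Cardinal.lift_lt] at hlt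
  rw [← hκ]
  exact Cardinal.lt_ord.2 hlt

theorem IsMeasurable.isSuccLimit {κ : Ordinal} (h : IsMeasurable κ) : Order.IsSuccLimit κ := by
  have hω : Cardinal.aleph0 ≤ κ.card := by
    rw [← Ordinal.card_omega0]
    exact Ordinal.card_le_card h.2.1.le
  rw [← h.1]
  exact Cardinal.isSuccLimit_ord hω

theorem IsMeasurable.exists_ultrafilter {κ : Ordinal} (h : IsMeasurable κ) :
    ∃ 𝓤 : Ultrafilter Ordinal, (∀ᶠ β in 𝓤, β < κ) ∧ IsCompleteFilter κ 𝓤 ∧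
      ∀ β < κ, ∀ᶠ γ in 𝓤, β ≤ γ := by
  obtain ⟨-, -, F, hF, hnp, hc⟩ := h
  refine ⟨hF.toUltrafilter, hF.mem_toUltrafilter_of_mem hF.univ_mem, hc.isCompleteFilter hF,
    fun β hβ => ?_⟩
  have hne : ∀ i : Iio β, ∀ᶠ γ : Ordinal in hF.toUltrafilter, γ ≠ i := fun i =>
    Ultrafilter.eventually_not.2 fun hi => hnp i <|
      (hF.mem_toUltrafilter_of_subset (singleton_subset_iff.2 (i.2.trans hβ))).1 hi
  filter_upwards [hc.isCompleteFilter hF β hβ _ hne] with γ hγ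
  by_contra! hγβ
  exact hγ ⟨γ, hγβ⟩ rfl

theorem IsMeasurable.isCompact_of_cofinal {β : Ordinal.{0}} (hβ : IsMeasurable β)
    (hcof : ∀ γ < β, ∃ δ, IsCompact δ ∧ γ < δ ∧ δ < β) : IsCompact β := by
  -- the fine measure on `P_β(λ)` is the `𝓾`-sum of fine measures for compacts cofinal in `β`
  obtain ⟨𝓾, hlt, hcompl, hge⟩ := hβ.exists_ultrafilter
  refine isCompact_iff.2 ⟨hβ.1, hβ.2.1, fun lam hlam hle => ?_⟩
  choose! δ hδ hγδ hδβ using hcof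
  choose! 𝓖 h𝓖 using fun γ (hγ : γ < β) =>
    (isCompact_iff.1 (hδ γ hγ)).2.2 lam hlam ((hδβ γ hγ).le.trans hle)
  refine ⟨𝓾.bind 𝓖, ?_, fun ε hε p hp => ?_, fun i hi => ?_⟩ <;> refine eventually_bind.2 ?_
  · filter_upwards [hlt] with γ hγ
    exact (h𝓖 γ hγ).eventually_mem_sP.mono fun _ hx => sP_mono (hδβ γ hγ).le hx
  · filter_upwards [hlt, hge ε hε, hcompl ε hε _ hp] with γ hγ hεγ hγp
    exact (h𝓖 γ hγ).complete ε (hεγ.trans_lt (hγδ γ hγ)) _ hγp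
  · filter_upwards [hlt] with γ hγ using (h𝓖 γ hγ).eventually_mem i hi

/-! ### The normal measure induced by a supercompactness measure -/

/-- For almost every `x`, `x ∩ α` is the ordinal `mex x`, the `κ_x` of the literature;
`𝓕.map mex` is the normal measure on `α` derived from `𝓕`. -/
noncomputable def mex (x : Set Ordinal) : Ordinal := sInf xᶜ

theorem Iio_mex_subset (x : Set Ordinal) : Iio (mex x) ⊆ x :=
  fun _ hβ => by simpa using notMem_of_lt_csInf' (s := xᶜ) hβ

theorem mex_notMem {x : Set Ordinal} {β : Ordinal} (hβ : β ∉ x) : mex x ∉ x :=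
  csInf_mem (s := xᶜ) ⟨β, hβ⟩

theorem mex_lt_of_mem_sP {κ lam : Ordinal.{0}} {x : Set Ordinal.{0}} (hκ : IsCard κ)
    (hx : x ∈ sP κ lam) : mex x < κ :=
  lt_of_Iio_subset_of_mem_sP hκ hx (Iio_mex_subset x)

namespace IsSupercompactMeasure

variable {α lam : Ordinal.{0}} {𝓕 : Ultrafilter (Set Ordinal.{0})}
  (h : IsSupercompactMeasure α lam 𝓕)
include h

theorem eventually_mex_lt : ∀ᶠ x in 𝓕, mex x < α :=
  h.eventually_mem_sP.mono fun _ hx => mex_lt_of_mem_sP h.isCard hx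

theorem eventually_Iio_subset {β : Ordinal} (hβ : β < α) : ∀ᶠ x in 𝓕, Iio β ⊆ x :=
  (h.complete β hβ _ fun i => h.eventually_mem i (i.2.trans (hβ.trans_le h.le))).mono
    fun _ hx γ hγ => hx ⟨γ, hγ⟩

theorem eventually_inter_Iio_eq : ∀ᶠ x in 𝓕, x ∩ Iio α = Iio (mex x) := by
  have hsub : ∀ᶠ x in 𝓕, x ∩ Iio α ⊆ Iio (mex x) := by
    by_contra hnot
    have hbad : ∀ᶠ x in 𝓕, ∃ ζ, (ζ ∈ x ∧ ζ < α) ∧ mex x ≤ ζ :=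
      (Ultrafilter.eventually_not.2 hnot).mono fun x hx => by
        simpa [not_subset] using hx
    obtain ⟨ζ, hζ⟩ := Filter.skolem.1 hbad
    obtain ⟨ζ₀, hζ₀⟩ := h.exists_eventually_eq ζ (hζ.mono fun x hx => hx.1.1)
    obtain ⟨x₀, hx₀, hx₀ζ⟩ := (hζ.and hζ₀).exists
    obtain ⟨x, hx, hxζ, hseg, hxsP⟩ := (hζ.and (hζ₀.and ((h.eventually_Iio_subset
      (hx₀ζ ▸ hx₀.1.2)).and h.eventually_mem_sP))).exists
    rw [hxζ] at hx
    refine mex_notMem (fun hlam => lt_irrefl lam (hxsP.1 hlam)) ?_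
    rcases hx.2.eq_or_lt with heq | hlt
    · exact heq ▸ hx.1.1
    · exact hseg hlt
  filter_upwards [hsub, h.eventually_mex_lt] with x hx hmex
  exact hx.antisymm fun γ hγ => ⟨Iio_mex_subset x hγ, hγ.trans hmex⟩

theorem eventually_lt_mex {β : Ordinal} (hβ : β < α) : ∀ᶠ x in 𝓕, β < mex x := by
  filter_upwards [h.eventually_mem β (hβ.trans_le h.le), h.eventually_inter_Iio_eq] with x hβx hx
  exact hx.subset ⟨hβx, hβ⟩

theorem exists_eventually_eq_of_lt_mex {f : Set Ordinal → Ordinal}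
    (hf : ∀ᶠ x in 𝓕, f x < mex x) : ∃ γ, ∀ᶠ x in 𝓕, f x = γ :=
  h.exists_eventually_eq f (hf.mono fun x hx => Iio_mex_subset x hx)

theorem isNormalOn_map : IsNormalOn α (𝓕.map mex) where
  eventually_lt := h.eventually_mex_lt
  eventually_gt _ := h.eventually_lt_mex
  exists_eventually_eq _ hf := h.exists_eventually_eq_of_lt_mex hf

theorem isCompleteFilter_map : IsCompleteFilter α (𝓕.map mex) :=
  fun δ hδ p hp => h.complete δ hδ (fun i x => p i (mex x)) hp

theorem isMeasurable : IsMeasurable α :=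
  ⟨h.isCard, h.isNormalOn_map.omega0_lt, setsWithin (𝓕.map mex) (Iio α),
    isUltrafilterOnSet_setsWithin h.isNormalOn_map.eventually_lt,
    fun b hb => h.isNormalOn_map.singleton_notMem b hb.2,
    isComplete_setsWithin h.isNormalOn_map.eventually_lt h.isCompleteFilter_map⟩

end IsSupercompactMeasure

theorem IsSupercompact.isMeasurable {α : Ordinal.{0}} (h : IsSupercompact α) : IsMeasurable α := by
  obtain ⟨𝓕, h𝓕⟩ := h.exists_isSupercompactMeasure h.1 le_rfl
  exact h𝓕.isMeasurable

theorem IsSupercompact.isCompact {α : Ordinal.{0}} (h : IsSupercompact α) : IsCompact α :=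
  isCompact_iff.2 ⟨h.1, h.isMeasurable.2.1, fun _ hlam hle =>
    (h.exists_isSupercompactMeasure hlam hle).imp fun _ h𝓕 => h𝓕.toIsFineMeasure⟩

/-! ### Reflection of measurability -/

/-- The ultrafilter on `mex x` that `x` sees: the traces on `mex x` of the `𝓕.map mex`-large sets
whose code lies in `x`. -/
noncomputable def localMeasure (𝓕 : Ultrafilter (Set Ordinal)) (code : Set Ordinal → Ordinal)
    (x : Set Ordinal) : Set (Set Ordinal) :=
  {W | W ⊆ Iio (mex x) ∧ ∃ Z ∈ 𝓕.map mex, code Z ∈ x ∧ Z ∩ Iio (mex x) = W}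

namespace IsSupercompactMeasure

variable {α lam : Ordinal.{0}} {𝓕 : Ultrafilter (Set Ordinal.{0})}
  (h : IsSupercompactMeasure α lam 𝓕)
include h

theorem exists_eventually_eq_inter_Iio_mex {W : Set Ordinal → Set Ordinal}
    (hW : ∀ᶠ x in 𝓕, W x ⊆ Iio (mex x)) : ∃ Z, ∀ᶠ x in 𝓕, W x = Z ∩ Iio (mex x) := by
  -- otherwise a point of disagreement below `mex x` is, by normality, a.e. the same `β`
  set Z := {β | ∀ᶠ x in 𝓕, β ∈ W x}
  have hpt : ∀ β < α, ∀ᶠ x in 𝓕, (β ∈ W x ↔ β ∈ Z ∩ Iio (mex x)) := by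
    intro β hβ
    by_cases hZ : β ∈ Z
    · filter_upwards [hZ, h.eventually_lt_mex hβ] with x h1 h2 using iff_of_true h1 ⟨hZ, h2⟩
    · filter_upwards [Ultrafilter.eventually_not.2 hZ] with x h1 using
        iff_of_false h1 fun h2 => hZ h2.1
  refine ⟨Z, by_contra fun hnot => ?_⟩
  have hbad : ∀ᶠ x in 𝓕, ∃ β, β < mex x ∧ ¬(β ∈ W x ↔ β ∈ Z ∩ Iio (mex x)) := by
    filter_upwards [Ultrafilter.eventually_not.2 hnot, hW] with x hne hWx
    obtain ⟨β, hβ⟩ := not_forall.1 fun hall => hne (Set.ext hall)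
    have hβ' : β ∈ W x ∨ β ∈ Z ∩ Iio (mex x) := by tauto
    exact ⟨β, hβ'.elim (fun h1 => hWx h1) fun h1 => h1.2, hβ⟩
  obtain ⟨k, hk⟩ := Filter.skolem.1 hbad
  obtain ⟨β, hβ⟩ := h.exists_eventually_eq_of_lt_mex (hk.mono fun _ hx => hx.1)
  obtain ⟨x₀, hx₀, hx₀β, hx₀α⟩ := (hk.and (hβ.and h.eventually_mex_lt)).exists
  obtain ⟨x, hx, hxβ, hxW⟩ := (hk.and (hβ.and (hpt β (hx₀β ▸ hx₀.1.trans hx₀α)))).exists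
  exact hx.2 (hxβ ▸ hxW)

theorem eventually_forall_subset_Iio_mex {P : Set Ordinal → Set Ordinal → Prop}
    (hP : ∀ Z, ∀ᶠ x in 𝓕, P x (Z ∩ Iio (mex x))) : ∀ᶠ x in 𝓕, ∀ W ⊆ Iio (mex x), P x W := by
  by_contra hnot
  have hbad : ∀ᶠ x in 𝓕, ∃ W, W ⊆ Iio (mex x) ∧ ¬P x W :=
    (Ultrafilter.eventually_not.2 hnot).mono fun x hx => by push Not at hx; exact hx
  obtain ⟨W, hW⟩ := Filter.skolem.1 hbad
  obtain ⟨Z, hZ⟩ := h.exists_eventually_eq_inter_Iio_mex (hW.mono fun _ hx => hx.1)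
  obtain ⟨x, hx, hxZ, hPx⟩ := (hW.and (hZ.and (hP Z))).exists
  exact hx.2 (hxZ ▸ hPx)

theorem eventually_forall_family_subset_Iio_mex {δ : Ordinal} (hδ : δ < α)
    {P : Set Ordinal → (Iio δ → Set Ordinal) → Prop}
    (hP : ∀ Z : Iio δ → Set Ordinal, ∀ᶠ x in 𝓕, P x fun i => Z i ∩ Iio (mex x)) :
    ∀ᶠ x in 𝓕, ∀ W : Iio δ → Set Ordinal, (∀ i, W i ⊆ Iio (mex x)) → P x W := by
  by_contra hnot
  have hbad : ∀ᶠ x in 𝓕, ∃ W : Iio δ → Set Ordinal, (∀ i, W i ⊆ Iio (mex x)) ∧ ¬P x W :=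
    (Ultrafilter.eventually_not.2 hnot).mono fun x hx => by push Not at hx; exact hx
  obtain ⟨W, hW⟩ := Filter.skolem.1 hbad
  choose Z hZ using fun i => h.exists_eventually_eq_inter_Iio_mex (hW.mono fun _ hx => hx.1 i)
  obtain ⟨x, hx, hxZ, hPx⟩ := (hW.and ((h.complete δ hδ _ hZ).and (hP Z))).exists
  exact hx.2 (funext hxZ ▸ hPx)

section Codes

variable {code : Set Ordinal → Ordinal} (hcode_lt : ∀ Z, code Z < lam)
  (hcode_inj : ∀ Z Z', code Z = code Z' → Z ∩ Iio α = Z' ∩ Iio α)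
include hcode_lt hcode_inj

theorem eventually_inter_mem_localMeasure_iff (Z : Set Ordinal) :
    (∀ᶠ x in 𝓕, Z ∩ Iio (mex x) ∈ localMeasure 𝓕 code x) ↔ Z ∈ 𝓕.map mex := by
  refine ⟨fun hZ => ?_, fun hZ => ?_⟩
  · obtain ⟨Z', hZ'⟩ := Filter.skolem.1 (hZ.mono fun _ hx => hx.2)
    obtain ⟨c, hc⟩ := h.exists_eventually_eq (code ∘ Z') (hZ'.mono fun _ hx => hx.2.1)
    obtain ⟨x₀, hx₀, hx₀c⟩ := (hZ'.and hc).exists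
    refine Filter.mem_of_superset (Filter.inter_mem hx₀.1 h.isNormalOn_map.eventually_lt)
      fun β hβ => ?_
    obtain ⟨x, hx, hxc, hβx⟩ := (hZ'.and (hc.and (h.eventually_lt_mex hβ.2))).exists
    have hβ' : β ∈ Z' x ∩ Iio α := by
      rw [hcode_inj _ _ (hxc.trans hx₀c.symm)]
      exact hβ
    exact (hx.2.2 ▸ ⟨hβ'.1, hβx⟩ : β ∈ Z ∩ Iio (mex x)).1
  · filter_upwards [h.eventually_mem _ (hcode_lt (Z ∩ Iio α)), h.eventually_mex_lt] with x hx hmex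
    refine ⟨inter_subset_right, Z ∩ Iio α, Filter.inter_mem hZ h.isNormalOn_map.eventually_lt, hx,
      ?_⟩
    rw [inter_assoc, inter_eq_right.2 (Iio_subset_Iio hmex.le)]

theorem eventually_isUltrafilterOnSet_localMeasure :
    ∀ᶠ x in 𝓕, IsUltrafilterOnSet (Iio (mex x)) (localMeasure 𝓕 code x) := by
  have hloc := h.eventually_inter_mem_localMeasure_iff hcode_lt hcode_inj
  have hempty : ∀ᶠ x in 𝓕, ∅ ∉ localMeasure 𝓕 code x := by
    refine Ultrafilter.eventually_not.2 fun hmem => Ultrafilter.empty_notMem (f := 𝓕.map mex) ?_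
    exact (hloc ∅).1 (by simpa using hmem)
  have hinter : ∀ᶠ x in 𝓕, ∀ W ⊆ Iio (mex x), ∀ W' ⊆ Iio (mex x),
      W ∈ localMeasure 𝓕 code x → W' ∈ localMeasure 𝓕 code x →
        W ∩ W' ∈ localMeasure 𝓕 code x :=
    h.eventually_forall_subset_Iio_mex fun Z => h.eventually_forall_subset_Iio_mex fun Z' => by
      simp only [← inter_inter_distrib_right]
      rw [Ultrafilter.eventually_imp, Ultrafilter.eventually_imp, hloc, hloc, hloc]
      exact Filter.inter_mem
  have hcompl : ∀ᶠ x in 𝓕, ∀ W ⊆ Iio (mex x),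
      W ∈ localMeasure 𝓕 code x ∨ Iio (mex x) \ W ∈ localMeasure 𝓕 code x :=
    h.eventually_forall_subset_Iio_mex fun Z => by
      have hdiff : ∀ x : Set Ordinal, Iio (mex x) \ (Z ∩ Iio (mex x)) = Zᶜ ∩ Iio (mex x) :=
        fun _ => by rw [sdiff_inter_self_eq_sdiff, sdiff_eq_compl_inter]
      simp only [hdiff]
      rw [Ultrafilter.eventually_or, hloc, hloc]
      exact Ultrafilter.mem_or_compl_mem _ Z
  filter_upwards [hempty, hinter, hcompl] with x hempty hinter hcompl
  exact .of_inter_mem (fun _ hW => hW.1) hempty (fun W hW W' hW' => hinter W hW.1 W' hW'.1 hW hW')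
    hcompl

theorem eventually_isNonprincipal_localMeasure :
    ∀ᶠ x in 𝓕, IsNonprincipal (localMeasure 𝓕 code x) := by
  by_contra hnot
  have hbad : ∀ᶠ x in 𝓕, ∃ b, {b} ∈ localMeasure 𝓕 code x :=
    (Ultrafilter.eventually_not.2 hnot).mono fun x hx => by simpa [IsNonprincipal] using hx
  obtain ⟨b, hb⟩ := Filter.skolem.1 hbad
  obtain ⟨b₀, hb₀⟩ := h.exists_eventually_eq_of_lt_mex (hb.mono fun _ hx => hx.1 rfl)
  refine h.isNormalOn_map.singleton_notMem b₀
    ((h.eventually_inter_mem_localMeasure_iff hcode_lt hcode_inj {b₀}).1 ?_)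
  filter_upwards [hb, hb₀] with x hx hxb
  rw [hxb] at hx
  rwa [inter_eq_left.2 hx.1]

theorem eventually_iInter_mem_localMeasure {δ : Ordinal} (hδ : δ < α) :
    ∀ᶠ x in 𝓕, ∀ W : Iio δ → Set Ordinal, (∀ i, W i ∈ localMeasure 𝓕 code x) →
      Iio (mex x) ∩ ⋂ i, W i ∈ localMeasure 𝓕 code x := by
  have hloc := h.eventually_inter_mem_localMeasure_iff hcode_lt hcode_inj
  have hall := h.eventually_forall_family_subset_Iio_mex hδ
    (P := fun x W => (∀ i, W i ∈ localMeasure 𝓕 code x) →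
      Iio (mex x) ∩ ⋂ i, W i ∈ localMeasure 𝓕 code x) fun Z => by
    have hcap : ∀ x : Set Ordinal,
        Iio (mex x) ∩ ⋂ i, (Z i ∩ Iio (mex x)) = (⋂ i, Z i) ∩ Iio (mex x) := by
      intro x
      ext γ
      simp only [mem_inter_iff, mem_iInter]
      exact ⟨fun hγ => ⟨fun i => (hγ.2 i).1, hγ.1⟩, fun hγ => ⟨hγ.2, fun i => ⟨hγ.1 i, hγ.2⟩⟩⟩
    simp only [hcap]
    rw [Ultrafilter.eventually_imp, hloc]
    intro hZ
    refine Filter.mem_of_superset (h.isCompleteFilter_map δ hδ (fun i γ => γ ∈ Z i)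
      fun i => (hloc (Z i)).1 (hZ.mono fun _ hx => hx i)) fun _ hγ => mem_iInter.2 hγ
  exact hall.mono fun x hx W hW => hx W (fun i => (hW i).1) hW

theorem eventually_isComplete_localMeasure :
    ∀ᶠ x in 𝓕, IsComplete (mex x) (Iio (mex x)) (localMeasure 𝓕 code x) := by
  by_contra hnot
  have hbad : ∀ᶠ x in 𝓕, ∃ δ, δ < mex x ∧ ∃ g : Iio δ → Set Ordinal,
      (∀ i, g i ∈ localMeasure 𝓕 code x) ∧ Iio (mex x) ∩ ⋂ i, g i ∉ localMeasure 𝓕 code x :=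
    (Ultrafilter.eventually_not.2 hnot).mono fun x hx => by simpa [IsComplete] using hx
  obtain ⟨δ, hδ⟩ := Filter.skolem.1 hbad
  obtain ⟨δ₀, hδ₀⟩ := h.exists_eventually_eq_of_lt_mex (hδ.mono fun _ hx => hx.1)
  obtain ⟨x₀, hx₀, hx₀δ, hx₀α⟩ := (hδ.and (hδ₀.and h.eventually_mex_lt)).exists
  have hbad₀ : ∀ᶠ x in 𝓕, ∃ g : Iio δ₀ → Set Ordinal,
      (∀ i, g i ∈ localMeasure 𝓕 code x) ∧ Iio (mex x) ∩ ⋂ i, g i ∉ localMeasure 𝓕 code x := by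
    filter_upwards [hδ, hδ₀] with x hx hxδ
    rw [← hxδ]
    exact hx.2
  obtain ⟨x, ⟨g, hg, hgn⟩, hx⟩ := (hbad₀.and (h.eventually_iInter_mem_localMeasure hcode_lt
    hcode_inj (hx₀δ ▸ hx₀.1.trans hx₀α))).exists
  exact hgn (hx g hg)

theorem eventually_isMeasurable_mex : ∀ᶠ x in 𝓕, IsMeasurable (mex x) := by
  filter_upwards [h.isNormalOn_map.eventually_isCard h.isCard,
    h.isNormalOn_map.eventually_gt _ h.isNormalOn_map.omega0_lt,
    h.eventually_isUltrafilterOnSet_localMeasure hcode_lt hcode_inj,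
    h.eventually_isNonprincipal_localMeasure hcode_lt hcode_inj,
    h.eventually_isComplete_localMeasure hcode_lt hcode_inj] with x hcard hω huf hnp hcompl
  exact ⟨hcard, hω, _, huf, hnp, hcompl⟩

end Codes

end IsSupercompactMeasure

theorem exists_code_lt (α lam : Ordinal.{0}) (hlam : 2 ^ α.card ≤ lam.card) :
    ∃ code : Set Ordinal.{0} → Ordinal.{0},
      (∀ Z, code Z < lam) ∧ ∀ Z Z', code Z = code Z' → Z ∩ Iio α = Z' ∩ Iio α := by
  obtain ⟨e⟩ : Nonempty (Set (Iio α) ↪ Iio lam) := by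
    rw [← Cardinal.le_def, Cardinal.mk_set, Cardinal.mk_Iio_ordinal, Cardinal.mk_Iio_ordinal,
      ← Cardinal.lift_two_power, Cardinal.lift_le]
    exact hlam
  refine ⟨fun Z => e (Subtype.val ⁻¹' Z), fun Z => (e _).2, fun Z Z' hZZ' => ?_⟩
  have hpre := e.injective (Subtype.ext hZZ')
  ext β
  exact and_congr_left fun hβ => Set.ext_iff.1 hpre ⟨β, hβ⟩

theorem IsSupercompact.exists_isNormalOn_eventually_isMeasurable {α : Ordinal.{0}}
    (h : IsSupercompact α) : ∃ 𝓓, IsNormalOn α 𝓓 ∧ ∀ᶠ γ in 𝓓, IsMeasurable γ := by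
  have hle : α ≤ ((2 : Cardinal) ^ α.card).ord :=
    h.1.symm.trans_le (Cardinal.ord_le_ord.2 (Cardinal.cantor α.card).le)
  obtain ⟨𝓕, h𝓕⟩ := h.exists_isSupercompactMeasure (by simp [IsCard]) hle
  obtain ⟨code, hlt, hinj⟩ := exists_code_lt α ((2 : Cardinal) ^ α.card).ord (by simp)
  exact ⟨𝓕.map mex, h𝓕.isNormalOn_map, h𝓕.eventually_isMeasurable_mex hlt hinj⟩

/-! ### The separation -/

theorem IsSupercompact.exists_isNormalOn_eventually_isCompact {α : Ordinal.{0}}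
    (h : IsSupercompact α) (hcof : ∀ γ < α, ∃ δ, IsSupercompact δ ∧ γ < δ ∧ δ < α) :
    ∃ 𝓓, IsNormalOn α 𝓓 ∧ ∀ᶠ δ in 𝓓, IsCompact δ := by
  obtain ⟨𝓓, h𝓓, hmeas⟩ := h.exists_isNormalOn_eventually_isMeasurable
  refine ⟨𝓓, h𝓓, ?_⟩
  filter_upwards [hmeas, h𝓓.eventually_forall_lt_exists hcof] with δ hδ hδcof
  exact hδ.isCompact_of_cofinal fun γ hγ =>
    (hδcof γ hγ).imp fun _ hε => ⟨hε.1.isCompact, hε.2⟩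

theorem exists_isNormalOn_compact_not_supercompact (κ : Ordinal.{0}) (𝓥 : Ultrafilter Ordinal)
    (h𝓥 : IsNormalOn κ 𝓥) (hsc : ∀ᶠ α in 𝓥, IsSupercompact α) :
    ∃ 𝓦, IsNormalOn κ 𝓦 ∧ (∀ᶠ α in 𝓦, IsCompact α) ∧ ¬∀ᶠ α in 𝓦, IsSupercompact α := by
  induction κ using WellFoundedLT.induction generalizing 𝓥 with | _ κ ih => ?_
  have hcof : ∀ᶠ α in 𝓥, ∀ γ < α, ∃ δ, IsSupercompact δ ∧ γ < δ ∧ δ < α :=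
    h𝓥.eventually_forall_lt_exists fun γ hγ => ((hsc.and (h𝓥.eventually_gt γ hγ)).and
      h𝓥.eventually_lt).exists.imp fun _ hδ => ⟨hδ.1.1, hδ.1.2, hδ.2⟩
  have hsep : ∀ᶠ α in 𝓥, ∃ 𝓤, IsNormalOn α 𝓤 ∧ (∀ᶠ δ in 𝓤, IsCompact δ) ∧
      ¬∀ᶠ δ in 𝓤, IsSupercompact δ := by
    filter_upwards [hsc, hcof, h𝓥.eventually_lt] with α hα hαcof hακ
    obtain ⟨𝓓, h𝓓, hcpt⟩ := hα.exists_isNormalOn_eventually_isCompact hαcof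
    by_cases hsc𝓓 : ∀ᶠ δ in 𝓓, IsSupercompact δ
    · exact ih α hακ 𝓓 h𝓓 hsc𝓓
    · exact ⟨𝓓, h𝓓, hcpt, hsc𝓓⟩
  obtain ⟨𝓤, h𝓤⟩ := Filter.skolem.1 hsep
  refine ⟨𝓥.bind 𝓤, h𝓥.bind (h𝓤.mono fun _ h => h.1), h𝓤.mono fun _ h => h.2.1, fun hsc' => ?_⟩
  obtain ⟨α, hα, hαsc⟩ := (h𝓤.and (eventually_bind.1 hsc')).exists
  exact hα.2.2 hαsc

/-- If `κ` is measurable and `V` is a normal ultrafilter on `κ` containing the supercompact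
cardinals below `κ`, then there is a normal ultrafilter `W` on `κ` containing the compact
cardinals below `κ` but not the supercompact cardinals below `κ`. -/
theorem separate_compact_from_supercompact (κ : Ordinal) (hκ : IsMeasurable κ)
    (V : Set (Set Ordinal)) (hV : IsNormalUltrafilterOn κ V)
    (hsc : {α | α < κ ∧ IsSupercompact α} ∈ V) :
    ∃ W, IsNormalUltrafilterOn κ W ∧ {α | α < κ ∧ IsCompact α} ∈ W ∧
      {α | α < κ ∧ IsSupercompact α} ∉ W := by
  obtain ⟨𝓦, h𝓦, hcpt, hnot⟩ := exists_isNormalOn_compact_not_supercompact κ _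
    (hV.isNormalOn hκ.isSuccLimit) (hV.1.eventually_toUltrafilter.2 hsc)
  exact ⟨_, h𝓦.isNormalUltrafilterOn, (sep_mem_setsWithin h𝓦.eventually_lt).2 hcpt,
    fun h => hnot ((sep_mem_setsWithin h𝓦.eventually_lt).1 h)⟩

end Separability
end

section
/- Let κ be an uncountable cardinal, and let A_r ⊆ A_p be subsets of κ. Assume there is a normal ultrafilter V on κ with A_r ∈ V, and assume that for every α ∈ A_r there is a normal ultrafilter U_α on α with A_p ∩ α ∈ U_α. Then there exists a normal ultrafilter W on κ such that A_p ∈ W and A_r ∉ W. -/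
open Set

namespace Separability

open Order

namespace IsUltrafilterOnSet

variable {σ : Type*} {D X : Set σ} {F : Set (Set σ)}

theorem nonempty_of_mem (hF : IsUltrafilterOnSet D F) (hX : X ∈ F) : X.Nonempty :=
  nonempty_iff_ne_empty.2 fun h => hF.empty_not_mem (h ▸ hX)

theorem diff_mem_of_notMem (hF : IsUltrafilterOnSet D F) (hX : X ⊆ D) (h : X ∉ F) :
    D \ X ∈ F :=
  (hF.mem_or_compl_mem X hX).resolve_left h

end IsUltrafilterOnSet

namespace IsNormalUltrafilterOn

variable {κ : Ordinal} {V : Set (Set Ordinal)}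

theorem exists_lt_fiber_mem (hV : IsNormalUltrafilterOn κ V) {f : Ordinal → Ordinal}
    {S : Set Ordinal} (hS : S ∈ V) (hf : ∀ β ∈ S, f β < β) :
    ∃ γ < κ, {β | β ∈ S ∧ f β = γ} ∈ V := by
  obtain ⟨T, hT, γ, hγ⟩ := hV.2.2 f S hS fun β hβ _ => hf β hβ
  have hTS := hV.1.inter_mem T hT S hS
  obtain ⟨β, hβT, hβS⟩ := hV.1.nonempty_of_mem hTS
  refine ⟨γ, hγ β hβT ▸ (hf β hβS).trans (hV.1.sets_subset S hS hβS), ?_⟩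
  exact hV.1.superset_mem _ hTS _ (fun β hβ => hV.1.sets_subset S hS hβ.1)
    fun β hβ => ⟨hβ.2, hγ β hβ.1⟩

theorem exists_mem_gt (hκ : IsSuccPrelimit κ) (hV : IsNormalUltrafilterOn κ V)
    {X : Set Ordinal} (hX : X ∈ V) {δ : Ordinal} (hδ : δ < κ) : ∃ β ∈ X, δ < β := by
  obtain ⟨β, hβX, hδβ, -⟩ :=
    hV.1.nonempty_of_mem (hV.1.inter_mem X hX _ (hV.2.1 _ (hκ.succ_lt hδ)))
  exact ⟨β, hβX, succ_le_iff.1 hδβ⟩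

/-- Otherwise the predecessor function would be constant on a set in `V`, which is unbounded
by `exists_mem_gt`. -/
theorem setOf_isSuccPrelimit_mem (hκ : IsSuccPrelimit κ) (hV : IsNormalUltrafilterOn κ V) :
    {α | α < κ ∧ IsSuccPrelimit α} ∈ V := by
  set Succ := {α | α < κ ∧ ¬IsSuccPrelimit α}
  by_cases hSucc : Succ ∈ V
  · obtain ⟨γ, hγ, hfiber⟩ := hV.exists_lt_fiber_mem hSucc (f := Ordinal.pred) fun α hα =>
      Ordinal.pred_lt_iff_not_isSuccPrelimit.2 hα.2
    obtain ⟨β, ⟨hβ, hβγ⟩, hlt⟩ := hV.exists_mem_gt hκ hfiber (hκ.succ_lt hγ)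
    exact absurd (Ordinal.succ_pred_eq_iff_not_isSuccPrelimit.2 hβ.2) (hβγ ▸ hlt.ne)
  · refine hV.1.superset_mem _ (hV.1.diff_mem_of_notMem (fun α hα => hα.1) hSucc) _
      (fun α hα => hα.1) fun α ⟨hα, hαSucc⟩ => ⟨hα, of_not_not fun h => hαSucc ⟨hα, h⟩⟩

end IsNormalUltrafilterOn

/-- The sum `V-Σ_{α ∈ S} U α`. -/
def ultrafilterSum (κ : Ordinal) (S : Set Ordinal) (U : Ordinal → Set (Set Ordinal))
    (V : Set (Set Ordinal)) : Set (Set Ordinal) :=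
  {Y | Y ⊆ Iio κ ∧ {α | α ∈ S ∧ Y ∩ Iio α ∈ U α} ∈ V}

section UltrafilterSum

variable {κ : Ordinal} {V : Set (Set Ordinal)} {S : Set Ordinal}
  {U : Ordinal → Set (Set Ordinal)}

theorem mem_ultrafilterSum_of_forall (hV : IsUltrafilterOn κ V) (hS : S ∈ V)
    {Y T : Set Ordinal} (hY : Y ⊆ Iio κ) (hT : T ∈ V)
    (h : ∀ α ∈ T, α ∈ S → Y ∩ Iio α ∈ U α) : Y ∈ ultrafilterSum κ S U V :=
  ⟨hY, hV.superset_mem _ (hV.inter_mem T hT S hS) _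
    (fun _ hα => hV.sets_subset S hS hα.1) fun α hα => ⟨hα.2, h α hα.1 hα.2⟩⟩

theorem notMem_ultrafilterSum_of_forall (hV : IsUltrafilterOn κ V) {Y : Set Ordinal}
    (h : ∀ α ∈ S, Y ∩ Iio α ∉ U α) : Y ∉ ultrafilterSum κ S U V := fun hY =>
  have ⟨α, hαS, hα⟩ := hV.nonempty_of_mem hY.2
  h α hαS hα

theorem isUltrafilterOn_ultrafilterSum (hV : IsUltrafilterOn κ V) (hS : S ∈ V)
    (hU : ∀ α ∈ S, IsUltrafilterOn α (U α)) : IsUltrafilterOn κ (ultrafilterSum κ S U V) := by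
  have lt_of_mem : ∀ α ∈ S, α < κ := hV.sets_subset S hS
  refine ⟨fun Y hY => hY.1, ?_, ?_, ?_, ?_, ?_⟩
  · refine mem_ultrafilterSum_of_forall hV hS subset_rfl hS fun α _ hα => ?_
    rw [inter_eq_right.2 (Iio_subset_Iio (lt_of_mem α hα).le)]
    exact (hU α hα).univ_mem
  · exact notMem_ultrafilterSum_of_forall hV fun α hα h =>
      (hU α hα).empty_not_mem (by rwa [empty_inter] at h)
  · intro X hX Y hY hXY
    exact mem_ultrafilterSum_of_forall hV hS hY hX.2 fun α hα _ =>
      (hU α hα.1).superset_mem _ hα.2 _ inter_subset_right (inter_subset_inter_left _ hXY)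
  · intro X hX Y hY
    refine mem_ultrafilterSum_of_forall hV hS (inter_subset_left.trans hX.1)
      (hV.inter_mem _ hX.2 _ hY.2) fun α hα _ => ?_
    rw [inter_inter_distrib_right]
    exact (hU α hα.1.1).inter_mem _ hα.1.2 _ hα.2.2
  · intro X hX
    by_cases hXV : {α | α ∈ S ∧ X ∩ Iio α ∈ U α} ∈ V
    · exact Or.inl ⟨hX, hXV⟩
    refine Or.inr (mem_ultrafilterSum_of_forall hV hS sdiff_subset
      (hV.diff_mem_of_notMem (fun α hα => lt_of_mem α hα.1) hXV) fun α hα hαS => ?_)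
    have hcompl := (hU α hαS).diff_mem_of_notMem inter_subset_right fun h => hα.2 ⟨hαS, h⟩
    refine (hU α hαS).superset_mem _ hcompl _ inter_subset_right fun β ⟨hβα, hβX⟩ => ?_
    exact ⟨⟨hβα.trans (lt_of_mem α hαS), fun h => hβX ⟨h, hβα⟩⟩, hβα⟩

theorem cobounded_mem_ultrafilterSum (hκ : IsSuccPrelimit κ) (hV : IsNormalUltrafilterOn κ V)
    (hS : S ∈ V) (hU : ∀ α ∈ S, IsNormalUltrafilterOn α (U α)) {a : Ordinal} (ha : a < κ) :
    {β | a ≤ β ∧ β < κ} ∈ ultrafilterSum κ S U V := by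
  refine mem_ultrafilterSum_of_forall hV.1 hS (fun β hβ => hβ.2)
    (hV.2.1 _ (hκ.succ_lt ha)) fun α ⟨haα, hακ⟩ hα => ?_
  refine (hU α hα).1.superset_mem _ ((hU α hα).2.1 a (succ_le_iff.1 haα)) _
    inter_subset_right fun β ⟨haβ, hβα⟩ => ⟨⟨haβ, hβα.trans_le hακ.le⟩, hβα⟩

/-- Off `0`, where regressivity says nothing, the value of `f` on a set in `U α` is some
`g α < α`; then `g` is regressive, hence constant on a set in `V`. -/
theorem exists_const_of_regressive_ultrafilterSum (hV : IsNormalUltrafilterOn κ V) (hS : S ∈ V)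
    (hU : ∀ α ∈ S, IsNormalUltrafilterOn α (U α)) {f : Ordinal → Ordinal} {X : Set Ordinal}
    (hX : X ∈ ultrafilterSum κ S U V) (hf : ∀ β ∈ X, 0 < β → f β < β) :
    ∃ T ∈ ultrafilterSum κ S U V, ∃ γ, ∀ β ∈ T, f β = γ := by
  have hW := isUltrafilterOn_ultrafilterSum hV.1 hS fun α hα => (hU α hα).1
  by_cases hX' : X \ {0} ∈ ultrafilterSum κ S U V
  swap
  · refine ⟨_, hW.inter_mem _ hX _ (hW.diff_mem_of_notMem (sdiff_subset.trans hX.1) hX'),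
      f 0, fun β ⟨hβX, _, hβ⟩ => ?_⟩
    rw [of_not_not fun h => hβ ⟨hβX, h⟩]
  have hreg : ∀ α ∈ {α | α ∈ S ∧ X \ {0} ∩ Iio α ∈ U α},
      ∃ γ < α, {β | β ∈ X \ {0} ∩ Iio α ∧ f β = γ} ∈ U α := fun α hα =>
    (hU α hα.1).exists_lt_fiber_mem hα.2 fun β ⟨⟨hβX, hβ0⟩, _⟩ =>
      hf β hβX (pos_iff_ne_zero.2 hβ0)
  choose! g hg_lt hg using hreg
  obtain ⟨γ, -, hfiber⟩ := hV.exists_lt_fiber_mem hX'.2 hg_lt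
  refine ⟨{β | β ∈ X ∧ f β = γ}, mem_ultrafilterSum_of_forall hV.1 hS
    (fun β hβ => hX.1 hβ.1) hfiber fun α ⟨hα, hgα⟩ _ => ?_, γ, fun β hβ => hβ.2⟩
  refine (hU α hα.1).1.superset_mem _ (hg α hα) _ inter_subset_right ?_
  rintro β ⟨⟨⟨hβX, -⟩, hβα⟩, hfβ⟩
  exact ⟨⟨hβX, hfβ.trans hgα⟩, hβα⟩

theorem isNormalUltrafilterOn_ultrafilterSum (hκ : IsSuccPrelimit κ)
    (hV : IsNormalUltrafilterOn κ V) (hS : S ∈ V)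
    (hU : ∀ α ∈ S, IsNormalUltrafilterOn α (U α)) :
    IsNormalUltrafilterOn κ (ultrafilterSum κ S U V) :=
  ⟨isUltrafilterOn_ultrafilterSum hV.1 hS fun α hα => (hU α hα).1,
    fun _ => cobounded_mem_ultrafilterSum hκ hV hS hU,
    fun _ _ hX hf => exists_const_of_regressive_ultrafilterSum hV hS hU hX hf⟩

end UltrafilterSum

/-- If the `V`-sum of the `U α` contains `A_r`, then `V`-almost every `α` is a limit with
`A_r ∩ α ∈ U α`, and the induction hypothesis at those `α` yields normal ultrafilters
whose `V`-sum separates `A_p` from `A_r`. -/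
theorem exists_normal_separating {κ : Ordinal} (hκ : IsSuccPrelimit κ) {Ap Ar : Set Ordinal}
    (hAp : Ap ⊆ Iio κ) (hAr : Ar ⊆ Ap) {V : Set (Set Ordinal)}
    (hV : IsNormalUltrafilterOn κ V) (hArV : Ar ∈ V)
    (hUa : ∀ α ∈ Ar, ∃ Uα, IsNormalUltrafilterOn α Uα ∧ Ap ∩ Iio α ∈ Uα) :
    ∃ W, IsNormalUltrafilterOn κ W ∧ Ap ∈ W ∧ Ar ∉ W := by
  induction κ using WellFoundedLT.induction generalizing Ap Ar V with
  | ind κ IH =>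
  choose! U hU hApU using hUa
  have hApW := mem_ultrafilterSum_of_forall hV.1 hArV hAp hArV fun α _ => hApU α
  by_cases hArW : Ar ∉ ultrafilterSum κ Ar U V
  · exact ⟨_, isNormalUltrafilterOn_ultrafilterSum hκ hV hArV hU, hApW, hArW⟩
  set S := {α | α ∈ Ar ∧ Ar ∩ Iio α ∈ U α} ∩ {α | α < κ ∧ IsSuccPrelimit α}
  have hSV : S ∈ V := hV.1.inter_mem _ (not_not.1 hArW).2 _ (hV.setOf_isSuccPrelimit_mem hκ)
  have hsep : ∀ α ∈ S, ∃ Wα, IsNormalUltrafilterOn α Wα ∧ Ap ∩ Iio α ∈ Wα ∧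
      Ar ∩ Iio α ∉ Wα := fun α ⟨⟨hαAr, hArα⟩, hακ, hα⟩ =>
    IH α hακ hα inter_subset_right (inter_subset_inter_left _ hAr) (hU α hαAr) hArα
      fun β ⟨hβAr, hβα⟩ => ⟨U β, hU β hβAr, by
        rw [inter_assoc, Iio_inter_Iio, min_eq_right hβα.le]; exact hApU β hβAr⟩
  choose! W hW hApW hArW using hsep
  exact ⟨_, isNormalUltrafilterOn_ultrafilterSum hκ hV hSV hW,
    mem_ultrafilterSum_of_forall hV.1 hSV hAp hSV fun α _ => hApW α,
    notMem_ultrafilterSum_of_forall hV.1 hArW⟩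

/-- The generalized separation: if `A_r ⊆ A_p ⊆ κ`, some normal ultrafilter `V` on `κ`
contains `A_r`, and every `α ∈ A_r` carries a normal ultrafilter containing `A_p ∩ α`,
then some normal ultrafilter `W` on `κ` contains `A_p` but not `A_r`. -/
theorem generalized_separation (κ : Ordinal) (hcard : IsCard κ) (hunc : Ordinal.omega0 < κ)
    (Ap Ar : Set Ordinal) (hAp : Ap ⊆ Set.Iio κ) (hAr : Ar ⊆ Ap)
    (V : Set (Set Ordinal)) (hV : IsNormalUltrafilterOn κ V) (hArV : Ar ∈ V)
    (hUa : ∀ α ∈ Ar, ∃ Uα, IsNormalUltrafilterOn α Uα ∧ Ap ∩ Set.Iio α ∈ Uα) :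
    ∃ W, IsNormalUltrafilterOn κ W ∧ Ap ∈ W ∧ Ar ∉ W := by
  have hκ : IsSuccLimit κ := hcard ▸ Cardinal.isSuccLimit_ord (Ordinal.aleph0_le_card.2 hunc.le)
  exact exists_normal_separating hκ.isSuccPrelimit hAp hAr hV hArV hUa

end Separability
end
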